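/- arXiv:1004.3157 — 4 statements merged into one kernel-verified Lean document; each statement's English description precedes it below -/
import Mathlib

section
/- The group A_4 × Z_2, with A_4 permuting the indices and Z_2 swapping them, acts by simplicial automorphisms on (S^2 × S^2)_16; under this action, the orbit of x_{11}x_{22}x_{33}x_{12}x_{13} has length 24, the orbit of x_{11}x_{22}x_{12}x_{14}x_{34} has length 24, the orbit of x_{11}x_{22}x_{14}x_{24}x_{34} has length 24, and the orbits of x_{11}x_{22}x_{21}x_{24}x_{31} and x_{11}x_{22}x_{24}x_{31}x_{34} each have length 12. -/
open Finset

section Generic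

variable {V : Type*}

/-- Faces of the simplicial complex generated by a set of facets. -/
def cFaces (X : Set (Finset V)) : Set (Finset V) :=
  {A | A.Nonempty ∧ ∃ F ∈ X, A ⊆ F}

/-- Number of faces of dimension `k`. -/
noncomputable def fVec (X : Set (Finset V)) (k : ℕ) : ℕ :=
  Set.ncard {A | A ∈ cFaces X ∧ A.card = k + 1}

/-- Faces of the link of a simplex. -/
def lkFaces [DecidableEq V] (X : Set (Finset V)) (σ : Finset V) : Set (Finset V) :=
  {τ | τ.Nonempty ∧ Disjoint τ σ ∧ τ ∪ σ ∈ cFaces X}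

/-- Degree of a simplex: number of vertices of its link. -/
noncomputable def degS [DecidableEq V] (X : Set (Finset V)) (σ : Finset V) : ℕ :=
  Set.ncard {v : V | v ∉ σ ∧ insert v σ ∈ cFaces X}

def TwoNeighbourly [DecidableEq V] (X : Set (Finset V)) : Prop :=
  ∀ u v : V, {u} ∈ cFaces X → {v} ∈ cFaces X → u ≠ v → ({u, v} : Finset V) ∈ cFaces X

/-- Geometric realization of the complex with facet set `X`. -/
def realization [Fintype V] (X : Set (Finset V)) : Set (V → ℝ) :=
  {f | (∀ v, 0 ≤ f v) ∧ (∑ v, f v) = 1 ∧ ∃ F ∈ X, ∀ v, f v ≠ 0 → v ∈ F}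

/-- `X` triangulates the `d`-sphere. -/
def TriangulatesSphere [Fintype V] (X : Set (Finset V)) (d : ℕ) : Prop :=
  Nonempty ((realization X) ≃ₜ (Metric.sphere (0 : EuclideanSpace ℝ (Fin (d + 1))) 1))

/-- The edge graph of a simplicial complex. -/
def cGraph [DecidableEq V] (X : Set (Finset V)) : SimpleGraph V where
  Adj u v := u ≠ v ∧ ({u, v} : Finset V) ∈ cFaces X
  symm := by
    constructor
    intro u v h
    exact ⟨h.1.symm, by rw [Finset.pair_comm]; exact h.2⟩
  loopless := ⟨fun v h => h.1 rfl⟩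

/-- The subgroup of all vertex permutations which fix `S` pointwise and
map faces to faces. -/
def autRel [DecidableEq V] (X : Set (Finset V)) (S : Set V) : Subgroup (Equiv.Perm V) where
  carrier := {π | (∀ v ∈ S, π v = v) ∧ ∀ F : Finset V, F ∈ X ↔ F.image π ∈ X}
  one_mem' := by
    refine ⟨fun v _ => rfl, fun F => ?_⟩
    simp
  mul_mem' := by
    rintro a b ⟨ha1, ha2⟩ ⟨hb1, hb2⟩
    refine ⟨fun v hv => ?_, fun F => ?_⟩
    · show a (b v) = v
      rw [hb1 v hv, ha1 v hv]
    · have h : F.image ⇑(a * b) = (F.image ⇑b).image ⇑a := by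
        rw [Finset.image_image]; rfl
      rw [h]
      exact (hb2 F).trans (ha2 (F.image ⇑b))
  inv_mem' := by
    rintro a ⟨ha1, ha2⟩
    refine ⟨fun v hv => ?_, fun F => ?_⟩
    · have := ha1 v hv
      exact a.injective (by simpa using this.symm)
    · have h := ha2 (F.image ⇑a⁻¹)
      have e : (F.image ⇑a⁻¹).image ⇑a = F := by
        rw [Finset.image_image]
        refine Finset.ext fun x => ?_
        simp
      rw [e] at h
      exact h.symm

/-- An icosahedron: a 12-vertex simplicial 2-sphere all whose vertices have degree 5. -/
def IsIcosahedron [Fintype V] [DecidableEq V] (X : Set (Finset V)) : Prop :=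
  Fintype.card V = 12 ∧ (∀ F ∈ X, F.card = 3) ∧ (∀ v : V, {v} ∈ cFaces X) ∧
    (∀ v : V, degS X {v} = 5) ∧ TriangulatesSphere X 2

/-- Two icosahedra on the same vertex set are antimorphic if the identity map
exchanges distance one and distance two. -/
def Antimorphic [DecidableEq V] (X Y : Set (Finset V)) : Prop :=
  ∀ u v : V, u ≠ v →
    (((cGraph X).Adj u v ↔ (cGraph Y).dist u v = 2) ∧
      ((cGraph X).dist u v = 2 ↔ (cGraph Y).Adj u v))

end Generic

/-- The real projective plane, as the quotient of the 2-sphere by the antipodal map. -/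
def antipodalSetoid : Setoid (Metric.sphere (0 : EuclideanSpace ℝ (Fin 3)) 1) where
  r x y := (x : EuclideanSpace ℝ (Fin 3)) = y ∨ (x : EuclideanSpace ℝ (Fin 3)) = -y
  iseqv := by
    constructor
    · intro x; exact Or.inl rfl
    · rintro x y (h | h)
      · exact Or.inl h.symm
      · exact Or.inr (by rw [h, neg_neg])
    · rintro x y z (h1 | h1) (h2 | h2)
      · exact Or.inl (h1.trans h2)
      · exact Or.inr (by rw [h1, h2])
      · exact Or.inr (by rw [h1, h2])
      · exact Or.inl (by rw [h1, h2, neg_neg])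

def RealProjectivePlane : Type := Quotient antipodalSetoid

noncomputable instance : TopologicalSpace RealProjectivePlane :=
  instTopologicalSpaceQuotient

abbrev V4 : Type := Fin 4 × Fin 4

def x (i j : Fin 4) : V4 := (i, j)

/-- Action of a permutation of indices on `V4`, possibly composed with the flip. -/
def permV (σ : Equiv.Perm (Fin 4)) (s : Bool) : V4 → V4 :=
  fun p => if s then (σ p.2, σ p.1) else (σ p.1, σ p.2)

def basic16 : Set (Finset V4) :=
  {({x 0 0, x 1 1, x 2 2, x 0 1, x 0 2} : Finset V4),
   ({x 0 0, x 1 1, x 0 1, x 0 3, x 2 3} : Finset V4),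
   ({x 0 0, x 1 1, x 0 3, x 1 3, x 2 3} : Finset V4),
   ({x 0 0, x 1 1, x 1 0, x 1 3, x 2 0} : Finset V4),
   ({x 0 0, x 1 1, x 1 3, x 2 0, x 2 3} : Finset V4)}

/-- The facets of `(S² × S²)₁₆`. -/
def facets16 : Set (Finset V4) :=
  {F | ∃ σ : Equiv.Perm (Fin 4), Equiv.Perm.sign σ = 1 ∧
    ∃ s : Bool, ∃ B ∈ basic16, F = B.image (permV σ s)}

/-- Sorting an index pair: the quotient map identifying `x i j` with `x j i`. -/
def sortPair : V4 → V4 := fun p => if p.1 ≤ p.2 then p else (p.2, p.1)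

def basic10 : Set (Finset V4) :=
  {({x 0 0, x 1 1, x 2 2, x 0 1, x 0 2} : Finset V4),
   ({x 0 0, x 1 1, x 0 1, x 0 3, x 2 3} : Finset V4),
   ({x 0 0, x 1 1, x 0 3, x 1 3, x 2 3} : Finset V4),
   ({x 0 0, x 1 1, x 0 1, x 0 2, x 1 3} : Finset V4),
   ({x 0 0, x 1 1, x 0 2, x 1 3, x 2 3} : Finset V4)}

/-- The facets of `CP²₁₀`: the orbit of the five basic facets under `A₄` acting
on the indices (followed by sorting each index pair). -/
def facets10 : Set (Finset V4) :=
  {F | ∃ σ : Equiv.Perm (Fin 4), Equiv.Perm.sign σ = 1 ∧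
    ∃ B ∈ basic10, F = B.image (fun p => sortPair (σ p.1, σ p.2))}

/-- The cyclic permutation sending each entry of the list to the next one. -/
def cyc : List V4 → Equiv.Perm V4
  | a :: b :: rest => Equiv.swap a b * cyc (b :: rest)
  | _ => 1

def gPerm : Equiv.Perm V4 :=
  cyc [x 0 1, x 1 0, x 1 3, x 3 1, x 0 3, x 3 0, x 3 2, x 2 3, x 0 2, x 2 0, x 2 1, x 1 2]

def hPerm : Equiv.Perm V4 :=
  cyc [x 0 1, x 0 3, x 1 0, x 1 3, x 2 0] * cyc [x 0 2, x 3 1, x 3 2, x 2 1, x 2 3]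

def G12 : Subgroup (Equiv.Perm V4) := Subgroup.closure {gPerm, hPerm}

def basic12A : Finset V4 := {x 0 1, x 0 3, x 1 0, x 1 3, x 2 0}

def basic12B : Finset V4 := {x 0 1, x 0 2, x 0 3, x 1 0, x 2 0}

/-- The facets of `(S² × S²)₁₂`. -/
def facets12 : Set (Finset V4) :=
  {F | ∃ π ∈ G12, F = basic12A.image ⇑π ∨ F = basic12B.image ⇑π}


/-- The orbit of a facet under the group `A₄ × ℤ₂`. -/
def orbit16 (B : Finset V4) : Set (Finset V4) :=
  {F | ∃ σ : Equiv.Perm (Fin 4), Equiv.Perm.sign σ = 1 ∧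
    ∃ s : Bool, F = B.image (permV σ s)}

/-! `permV` realises `A₄ × ℤ₂` (indeed `S₄ × ℤ₂`) as a group of vertex permutations: composing two
of the maps multiplies the index permutations and adds the flips. Hence `facets16`, a union of
orbits, is invariant, and each orbit length is counted by running through the 24 group elements. -/

lemma permV_permV (τ σ : Equiv.Perm (Fin 4)) (t s : Bool) (p : V4) :
    permV τ t (permV σ s p) = permV (τ * σ) (xor s t) p := by
  cases s <;> cases t <;> simp [permV]

lemma image_permV_mem_facets16 {τ : Equiv.Perm (Fin 4)} (hτ : Equiv.Perm.sign τ = 1) (t : Bool)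
    {F : Finset V4} (hF : F ∈ facets16) : F.image (permV τ t) ∈ facets16 := by
  obtain ⟨σ, hσ, s, B, hB, rfl⟩ := hF
  refine ⟨τ * σ, by simp [hτ, hσ], xor s t, B, hB, ?_⟩
  rw [Finset.image_image]
  exact Finset.image_congr fun p _ => permV_permV τ σ t s p

lemma orbit16_eq_image (B : Finset V4) :
    orbit16 B = ↑((univ.filter fun q : Equiv.Perm (Fin 4) × Bool => Equiv.Perm.sign q.1 = 1).image
      fun q => B.image (permV q.1 q.2)) := by
  ext F
  simp [orbit16, eq_comm]

/-- `A₄ × ℤ₂` acts on `(S² × S²)₁₆` by simplicial automorphisms;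
the orbits of the five basic facets have lengths 24, 24, 24, 12, 12. -/
theorem stmt_2 :
    (∀ σ : Equiv.Perm (Fin 4), Equiv.Perm.sign σ = 1 → ∀ s : Bool,
      ∀ F ∈ facets16, F.image (permV σ s) ∈ facets16) ∧
    Set.ncard (orbit16 ({x 0 0, x 1 1, x 2 2, x 0 1, x 0 2} : Finset V4)) = 24 ∧
    Set.ncard (orbit16 ({x 0 0, x 1 1, x 0 1, x 0 3, x 2 3} : Finset V4)) = 24 ∧
    Set.ncard (orbit16 ({x 0 0, x 1 1, x 0 3, x 1 3, x 2 3} : Finset V4)) = 24 ∧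
    Set.ncard (orbit16 ({x 0 0, x 1 1, x 1 0, x 1 3, x 2 0} : Finset V4)) = 12 ∧
    Set.ncard (orbit16 ({x 0 0, x 1 1, x 1 3, x 2 0, x 2 3} : Finset V4)) = 12 := by
  refine ⟨fun σ hσ s F hF => image_permV_mem_facets16 hσ s hF, ?_⟩
  simp only [orbit16_eq_image, Set.ncard_coe_finset]
  decide
end

section
/- In the simplicial complex (S^2 × S^2)_16, for every i ≠ j the pair {x_{ij}, x_{ji}} is a non-edge, i.e., no facet contains both x_{ij} and x_{ji}. -/
open Finset

/-!
Transposition `x i j ↦ x j i` commutes with the symmetry group `A₄ × ℤ₂`, so a symmetry maps a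
facet containing no transposed pair `x i j, x j i` (`i ≠ j`) to another such facet; and none of
the five basic facets contains a transposed pair, as one checks directly.
-/

section TransposedPair

variable {α β : Type*}

def NoTransposedPair (B : Finset (α × α)) : Prop :=
  ∀ p ∈ B, p.swap ∈ B → p.swap = p

theorem NoTransposedPair.image [DecidableEq β] {B : Finset (α × α)} (hB : NoTransposedPair B)
    {f : α × α → β × β} (hf : Function.Injective f) (hswap : ∀ p, f p.swap = (f p).swap) :
    NoTransposedPair (B.image f) := by
  rintro _ hq hq'
  obtain ⟨p, hp, rfl⟩ := mem_image.mp hq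
  obtain ⟨p', hp', hfp'⟩ := mem_image.mp hq'
  rw [← hswap] at hfp' ⊢
  have hp'_eq : p' = p.swap := hf hfp'
  subst hp'_eq
  rw [hB p hp hp']

end TransposedPair

theorem permV_swap (σ : Equiv.Perm (Fin 4)) (s : Bool) (p : V4) :
    permV σ s p.swap = (permV σ s p).swap := by
  cases s <;> rfl

theorem permV_injective (σ : Equiv.Perm (Fin 4)) (s : Bool) : Function.Injective (permV σ s) := by
  rintro ⟨a, b⟩ ⟨c, d⟩ h
  cases s <;> simp only [permV, Prod.mk.injEq, σ.injective.eq_iff, Bool.false_eq_true,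
    if_true, if_false] at h <;> simp [h]

theorem noTransposedPair_of_mem_basic16 {B : Finset V4} (hB : B ∈ basic16) :
    NoTransposedPair B := by
  simp only [basic16, Set.mem_insert_iff, Set.mem_singleton_iff] at hB
  rcases hB with rfl | rfl | rfl | rfl | rfl <;> unfold NoTransposedPair <;> decide

theorem noTransposedPair_of_mem_facets16 {F : Finset V4} (hF : F ∈ facets16) :
    NoTransposedPair F := by
  obtain ⟨σ, -, s, B, hB, rfl⟩ := hF
  exact (noTransposedPair_of_mem_basic16 hB).image (permV_injective σ s) (permV_swap σ s)

/-- in `(S² × S²)₁₆`, for `i ≠ j` the pair `{x i j, x j i}` is a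
non-edge: no facet contains both. -/
theorem stmt_3 :
    ∀ i j : Fin 4, i ≠ j → ∀ F ∈ facets16, ¬(x i j ∈ F ∧ x j i ∈ F) := by
  rintro i j hij F hF ⟨hij_mem, hji_mem⟩
  have hfixed : (x i j).swap = x i j := noTransposedPair_of_mem_facets16 hF _ hij_mem hji_mem
  exact hij (congrArg Prod.fst hfixed).symm
end

section
/- The full automorphism group of the simplicial complex CP^2_10 is isomorphic to the alternating group A_4; in particular it has exactly 12 automorphisms. -/
open Finset

/-!
Even permutations `σ` of the indices act on the vertices by `x i j ↦ x (σ i) (σ j)` and permute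
the facets, because `CP²₁₀` is defined as an `A₄`-orbit. Conversely, an automorphism preserves
the number of facets containing any given face. The diagonal vertices `x i i` are exactly the
vertices lying in 27 facets, so an automorphism permutes them by some `σ`; and `x i j` is the only
vertex `w` such that `{w, x i i, x j j}` lies in exactly 7 facets, so the automorphism is the
action of `σ`. No odd `σ` acts by an automorphism. The facet counts and this last fact are finite
checks over the 48 facets.
-/

section AutRel

variable {V : Type*} {S : Set V} {π : Equiv.Perm V}

lemma apply_notMem_of_forall_mem_apply_eq (hS : ∀ v ∈ S, π v = v) {v : V} (hv : v ∉ S) :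
    π v ∉ S := fun h => hv (π.injective (hS _ h) ▸ h)

variable [DecidableEq V] {X : Set (Finset V)}

lemma mem_autRel_of_image_mem (hS : ∀ v ∈ S, π v = v) (hX : ∀ F ∈ X, F.image π ∈ X)
    (hX' : ∀ F ∈ X, F.image ⇑π⁻¹ ∈ X) : π ∈ autRel X S := by
  refine ⟨hS, fun F => ⟨hX F, fun h => ?_⟩⟩
  simpa [Finset.image_image] using hX' _ h

lemma ncard_superset_image_of_mem_autRel (hπ : π ∈ autRel X S) (A : Finset V) :
    {F ∈ X | A.image π ⊆ F}.ncard = {F ∈ X | A ⊆ F}.ncard := by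
  have himage : {F ∈ X | A.image π ⊆ F} = (fun F => F.image π) '' {F ∈ X | A ⊆ F} := by
    ext G
    constructor
    · rintro ⟨hG, hAG⟩
      refine ⟨G.image ⇑π⁻¹, ⟨((inv_mem hπ).2 G).1 hG, fun a ha => ?_⟩, ?_⟩
      · exact Finset.mem_image.2 ⟨π a, hAG (Finset.mem_image_of_mem π ha), by simp⟩
      · simp [Finset.image_image]
    · rintro ⟨F, ⟨hF, hAF⟩, rfl⟩
      exact ⟨(hπ.2 F).1 hF, Finset.image_subset_image hAF⟩
  rw [himage, Set.ncard_image_of_injective _ (Finset.image_injective π.injective)]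

end AutRel

lemma sortPair_of_le {p : V4} (h : p.1 ≤ p.2) : sortPair p = p := if_pos h

lemma sortPair_swap (a b : Fin 4) : sortPair (b, a) = sortPair (a, b) := by
  unfold sortPair
  split_ifs with hba hab hab
  · exact Prod.ext (le_antisymm hba hab) (le_antisymm hab hba)
  · rfl
  · rfl
  · exact absurd (le_of_not_ge hba) hab

lemma sortPair_fst_le_snd (p : V4) : (sortPair p).1 ≤ (sortPair p).2 := by
  unfold sortPair
  split_ifs with h
  · exact h
  · exact le_of_not_ge h

/-- The action of `σ` on the vertices `x i j`, `i ≤ j`, of `CP²₁₀`; the pairs `(i, j)` with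
`i > j`, which are not vertices, are left fixed. -/
def sortedAct (σ : Equiv.Perm (Fin 4)) (p : V4) : V4 :=
  if p.1 ≤ p.2 then sortPair (σ p.1, σ p.2) else p

lemma sortedAct_sortPair (σ : Equiv.Perm (Fin 4)) (p : V4) :
    sortedAct σ (sortPair p) = sortPair (σ p.1, σ p.2) := by
  by_cases h : p.1 ≤ p.2
  · rw [sortPair_of_le h, sortedAct, if_pos h]
  · have hp : sortPair p = (p.2, p.1) := if_neg h
    rw [hp, sortedAct, if_pos (le_of_not_ge h), sortPair_swap]

lemma sortedAct_one (p : V4) : sortedAct 1 p = p := by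
  unfold sortedAct
  split_ifs with h
  · exact sortPair_of_le h
  · rfl

lemma sortedAct_mul (σ τ : Equiv.Perm (Fin 4)) (p : V4) :
    sortedAct (σ * τ) p = sortedAct σ (sortedAct τ p) := by
  by_cases h : p.1 ≤ p.2
  · have hτ : sortedAct τ p = sortPair (τ p.1, τ p.2) := if_pos h
    rw [hτ, sortedAct_sortPair]
    exact if_pos h
  · simp only [sortedAct, if_neg h]

def indexAct : Equiv.Perm (Fin 4) →* Equiv.Perm V4 where
  toFun σ :=
    { toFun := sortedAct σ
      invFun := sortedAct σ⁻¹
      left_inv p := by rw [← sortedAct_mul, inv_mul_cancel, sortedAct_one]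
      right_inv p := by rw [← sortedAct_mul, mul_inv_cancel, sortedAct_one] }
  map_one' := Equiv.ext sortedAct_one
  map_mul' σ τ := Equiv.ext (sortedAct_mul σ τ)

lemma indexAct_apply (σ : Equiv.Perm (Fin 4)) (p : V4) : indexAct σ p = sortedAct σ p := rfl

lemma indexAct_diag (σ : Equiv.Perm (Fin 4)) (i : Fin 4) : indexAct σ (i, i) = (σ i, σ i) := by
  rw [indexAct_apply, sortedAct, if_pos le_rfl, sortPair_of_le le_rfl]

lemma indexAct_injective : Function.Injective indexAct := fun σ τ h =>
  Equiv.ext fun i => congrArg Prod.fst ((indexAct_diag σ i).symm.trans (h ▸ indexAct_diag τ i))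

lemma image_indexAct_mem_facets10 {σ : Equiv.Perm (Fin 4)} (hσ : σ ∈ alternatingGroup (Fin 4))
    {F : Finset V4} (hF : F ∈ facets10) : F.image (indexAct σ) ∈ facets10 := by
  obtain ⟨τ, hτ, B, hB, rfl⟩ := hF
  refine ⟨σ * τ, by rw [map_mul, hτ, Equiv.Perm.mem_alternatingGroup.1 hσ, one_mul], B, hB, ?_⟩
  rw [Finset.image_image]
  congr 1
  funext p
  simp only [Function.comp_apply, indexAct_apply, ← sortedAct_sortPair, sortedAct_mul]

lemma indexAct_mem_aut {σ : Equiv.Perm (Fin 4)} (hσ : σ ∈ alternatingGroup (Fin 4)) :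
    indexAct σ ∈ autRel facets10 {p : V4 | ¬ p.1 ≤ p.2} := by
  refine mem_autRel_of_image_mem (fun p hp => if_neg hp) (fun F => image_indexAct_mem_facets10 hσ)
    fun F => ?_
  rw [← map_inv]
  exact image_indexAct_mem_facets10 (inv_mem hσ)

def basic10Finset : Finset (Finset V4) :=
  {({x 0 0, x 1 1, x 2 2, x 0 1, x 0 2} : Finset V4),
   ({x 0 0, x 1 1, x 0 1, x 0 3, x 2 3} : Finset V4),
   ({x 0 0, x 1 1, x 0 3, x 1 3, x 2 3} : Finset V4),
   ({x 0 0, x 1 1, x 0 1, x 0 2, x 1 3} : Finset V4),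
   ({x 0 0, x 1 1, x 0 2, x 1 3, x 2 3} : Finset V4)}

def facets10Finset : Finset (Finset V4) :=
  (Finset.univ.filter fun σ : Equiv.Perm (Fin 4) => Equiv.Perm.sign σ = 1).biUnion
    fun σ => basic10Finset.image fun B => B.image fun p => sortPair (σ p.1, σ p.2)

lemma mem_facets10_iff {F : Finset V4} : F ∈ facets10 ↔ F ∈ facets10Finset := by
  simp only [facets10, facets10Finset, basic10, basic10Finset, Set.mem_insert_iff,
    Set.mem_singleton_iff, Finset.mem_biUnion, Finset.mem_filter, Finset.mem_univ, true_and,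
    Finset.mem_image, Finset.mem_insert, Finset.mem_singleton]
  grind

lemma ncard_facets10_superset (A : Finset V4) :
    {F ∈ facets10 | A ⊆ F}.ncard = (facets10Finset.filter (A ⊆ ·)).card := by
  rw [← Set.ncard_coe_finset]
  congr 1
  ext F
  simp [mem_facets10_iff]

lemma card_facets10Finset_superset_image
    {π : Equiv.Perm V4} (hπ : π ∈ autRel facets10 {p : V4 | ¬ p.1 ≤ p.2}) (A : Finset V4) :
    (facets10Finset.filter (A.image π ⊆ ·)).card = (facets10Finset.filter (A ⊆ ·)).card := by
  rw [← ncard_facets10_superset, ← ncard_facets10_superset,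
    ncard_superset_image_of_mem_autRel hπ]

lemma card_facets10Finset_superset_vertex : ∀ w : V4, w.1 ≤ w.2 →
    ((facets10Finset.filter ({w} ⊆ ·)).card = 27 ↔ w.1 = w.2) := by
  decide +kernel

lemma card_facets10Finset_superset_triple : ∀ w : V4, w.1 ≤ w.2 → ∀ a b : Fin 4, a ≠ b →
    ((facets10Finset.filter ({w, (a, a), (b, b)} ⊆ ·)).card = 7 ↔ w = sortPair (a, b)) := by
  decide +kernel

lemma exists_image_sortedAct_notMem_facets10Finset : ∀ σ : Equiv.Perm (Fin 4),
    Equiv.Perm.sign σ ≠ 1 → ∃ F ∈ facets10Finset, F.image (sortedAct σ) ∉ facets10Finset := by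
  decide +kernel

lemma mem_alternatingGroup_of_indexAct_mem {σ : Equiv.Perm (Fin 4)}
    (hσ : indexAct σ ∈ autRel facets10 {p : V4 | ¬ p.1 ≤ p.2}) : σ ∈ alternatingGroup (Fin 4) := by
  rw [Equiv.Perm.mem_alternatingGroup]
  by_contra hodd
  obtain ⟨F, hF, hσF⟩ := exists_image_sortedAct_notMem_facets10Finset σ hodd
  exact hσF (mem_facets10_iff.1 ((hσ.2 F).1 (mem_facets10_iff.2 hF)))

section Automorphism

variable {π : Equiv.Perm V4}

lemma fst_le_snd_apply (hπ : π ∈ autRel facets10 {p : V4 | ¬ p.1 ≤ p.2}) {v : V4}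
    (hv : v.1 ≤ v.2) : (π v).1 ≤ (π v).2 :=
  not_not.1 (apply_notMem_of_forall_mem_apply_eq hπ.1 (not_not.2 hv))

lemma apply_diag_fst_eq_snd (hπ : π ∈ autRel facets10 {p : V4 | ¬ p.1 ≤ p.2}) (i : Fin 4) :
    (π (i, i)).1 = (π (i, i)).2 := by
  have h := card_facets10Finset_superset_image hπ {(i, i)}
  rw [Finset.image_singleton] at h
  exact (card_facets10Finset_superset_vertex _ (fst_le_snd_apply hπ le_rfl)).1
    (h.trans ((card_facets10Finset_superset_vertex (i, i) le_rfl).2 rfl))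

lemma exists_perm_apply_diag (hπ : π ∈ autRel facets10 {p : V4 | ¬ p.1 ≤ p.2}) :
    ∃ σ : Equiv.Perm (Fin 4), ∀ i, π (i, i) = (σ i, σ i) := by
  let t : Fin 4 → Fin 4 := fun i => (π (i, i)).1
  have ht : ∀ i, π (i, i) = (t i, t i) := fun i => Prod.ext rfl (apply_diag_fst_eq_snd hπ i).symm
  have hinj : Function.Injective t := fun i j hij =>
    congrArg Prod.fst (π.injective ((ht i).trans (hij ▸ (ht j).symm)))
  exact ⟨Equiv.ofBijective t (Finite.injective_iff_bijective.1 hinj), ht⟩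

lemma eq_indexAct_of_apply_diag (hπ : π ∈ autRel facets10 {p : V4 | ¬ p.1 ≤ p.2})
    {σ : Equiv.Perm (Fin 4)} (hσ : ∀ i, π (i, i) = (σ i, σ i)) : π = indexAct σ := by
  ext1 ⟨a, b⟩
  by_cases hab : a ≤ b
  · rcases eq_or_ne a b with rfl | hne
    · rw [hσ, indexAct_diag]
    · have h := card_facets10Finset_superset_image hπ {(a, b), (a, a), (b, b)}
      simp only [Finset.image_insert, Finset.image_singleton, hσ] at h
      rw [(card_facets10Finset_superset_triple _ hab a b hne).2 (sortPair_of_le hab).symm] at h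
      rw [(card_facets10Finset_superset_triple _ (fst_le_snd_apply hπ hab) _ _
        (σ.injective.ne hne)).1 h]
      exact (if_pos hab).symm
  · rw [hπ.1 _ hab]
    exact (if_neg hab).symm

end Automorphism

lemma map_indexAct_alternatingGroup :
    (alternatingGroup (Fin 4)).map indexAct = autRel facets10 {p : V4 | ¬ p.1 ≤ p.2} := by
  ext π
  constructor
  · rintro ⟨σ, hσ, rfl⟩
    exact indexAct_mem_aut hσ
  · intro hπ
    obtain ⟨σ, hσ⟩ := exists_perm_apply_diag hπ
    have hπσ := eq_indexAct_of_apply_diag hπ hσ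
    exact ⟨σ, mem_alternatingGroup_of_indexAct_mem (hπσ ▸ hπ), hπσ.symm⟩

/-- the full automorphism group of `CP²₁₀` (permutations of its 10
vertices carrying facets to facets) is isomorphic to `A₄`; it has exactly 12
elements. -/
theorem stmt_6 :
    Nonempty ((autRel facets10 {p : V4 | ¬ p.1 ≤ p.2}) ≃* alternatingGroup (Fin 4)) ∧
    Nat.card (autRel facets10 {p : V4 | ¬ p.1 ≤ p.2}) = 12 := by
  let e := ((alternatingGroup (Fin 4)).equivMapOfInjective indexAct indexAct_injective).trans
    (MulEquiv.subgroupCongr map_indexAct_alternatingGroup)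
  refine ⟨⟨e.symm⟩, ?_⟩
  rw [← Nat.card_congr e.toEquiv, nat_card_alternatingGroup, Nat.card_eq_fintype_card,
    Fintype.card_fin]
  rfl
end

section
/- The 12-vertex complex (S^2 × S^2)_12 on the vertices x_{ij} (1 ≤ i ≠ j ≤ 4), generated under the group ⟨g, h⟩ with g = (x_{12} x_{21} x_{24} x_{42} x_{14} x_{41} x_{43} x_{34} x_{13} x_{31} x_{32} x_{23}) and h = (x_{12} x_{14} x_{21} x_{24} x_{31})(x_{13} x_{42} x_{43} x_{32} x_{34}) by the basic facets x_{12}x_{14}x_{21}x_{24}x_{31} (orbit length 12) and x_{12}x_{13}x_{14}x_{21}x_{31} (orbit length 60), has exactly 72 facets and face vector (12, 60, 160, 180, 72). -/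
open Finset

/-!
Encode a face `A` by the bit mask `∑ a ∈ A, 2 ^ e a`, where `e` is an injection of the vertices
into `ℕ`; comparing numbers instead of finsets keeps the computations small. The orbit of a basic
facet is computed as the closure of its mask under `g` and `h`. As `⟨g, h⟩` is finite, a set of
faces stable under the generators is stable under the whole group, so this closure is exactly the
set of masks of the orbit. The face numbers are then the numbers of distinct masks of
`(k + 1)`-subsets of the 72 facets.
-/

section BitMask

variable {α : Type*} (e : α ↪ ℕ)

def bitMask (A : Finset α) : ℕ := ∑ a ∈ A, 2 ^ e a

theorem testBit_bitMask (A : Finset α) (a : α) : (bitMask e A).testBit (e a) ↔ a ∈ A := by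
  rw [bitMask, ← Finset.sum_map A e (fun i => 2 ^ i), ← Nat.mem_bitIndices, ← List.mem_toFinset,
    Finset.toFinset_bitIndices_sum_two_pow, mem_map' e]

variable [Fintype α]

def ofBitMask (m : ℕ) : Finset α := univ.filter fun a => m.testBit (e a)

theorem ofBitMask_bitMask (A : Finset α) : ofBitMask e (bitMask e A) = A := by
  ext a
  simp [ofBitMask, testBit_bitMask]

theorem bitMask_injective : Function.Injective (bitMask e) :=
  Function.LeftInverse.injective (ofBitMask_bitMask e)

theorem ncard_eq_card_of_bitMask_image {X : Set (Finset α)} {S : Finset ℕ}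
    (hS : bitMask e '' X = S) : X.ncard = S.card := by
  rw [← Set.ncard_image_of_injective X (bitMask_injective e), hS, Set.ncard_coe_finset]

def permMask (g : Equiv.Perm α) (m : ℕ) : ℕ := bitMask e ((ofBitMask e m).map g.toEmbedding)

def maskOrbitStep (gs : List (Equiv.Perm α)) (S : Finset ℕ) : Finset ℕ :=
  S ∪ S.biUnion fun m => (gs.map fun g : Equiv.Perm α => permMask e g m).toFinset

def maskOrbitIter (gs : List (Equiv.Perm α)) (A : Finset α) (n : ℕ) : Finset ℕ :=
  (maskOrbitStep e gs)^[n] {bitMask e A}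

theorem bitMask_mem_maskOrbitIter (gs : List (Equiv.Perm α)) (A : Finset α) (n : ℕ) :
    bitMask e A ∈ maskOrbitIter e gs A n := by
  induction n with
  | zero => exact mem_singleton_self _
  | succ n ih =>
    rw [maskOrbitIter, Function.iterate_succ_apply']
    exact mem_union_left _ ih

def maskFaces (S : Finset ℕ) (k : ℕ) : Finset ℕ :=
  S.biUnion fun m => ((ofBitMask e m).powersetCard (k + 1)).image (bitMask e)

theorem fVec_eq_card_maskFaces {X : Set (Finset α)} {S : Finset ℕ} (hS : bitMask e '' X = S)
    (k : ℕ) : fVec X k = (maskFaces e S k).card := by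
  have hfaces : bitMask e '' {A | A ∈ cFaces X ∧ A.card = k + 1} = maskFaces e S k := by
    ext c
    simp only [maskFaces, Set.mem_image, Set.mem_ofPred_eq, coe_biUnion, mem_coe,
      Set.mem_iUnion, mem_image, mem_powersetCard, exists_prop]
    constructor
    · rintro ⟨A, ⟨⟨-, F, hF, hAF⟩, hA⟩, rfl⟩
      refine ⟨bitMask e F, ?_, A, ⟨by rwa [ofBitMask_bitMask], hA⟩, rfl⟩
      rw [← mem_coe, ← hS]
      exact ⟨F, hF, rfl⟩
    · rintro ⟨m, hm, A, ⟨hAm, hA⟩, rfl⟩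
      obtain ⟨F, hF, rfl⟩ : m ∈ bitMask e '' X := hS ▸ hm
      rw [ofBitMask_bitMask] at hAm
      exact ⟨A, ⟨⟨card_pos.1 (by omega), F, hF, hAm⟩, hA⟩, rfl⟩
  rw [fVec, ← Set.ncard_image_of_injective _ (bitMask_injective e), hfaces, Set.ncard_coe_finset]

end BitMask

section Orbit

variable {α : Type*} [DecidableEq α]

def imageOrbit (G : Subgroup (Equiv.Perm α)) (A : Finset α) : Set (Finset α) :=
  {F | ∃ π ∈ G, F = A.image π}

theorem image_mem_of_mem_closure [Finite α] {s : Set (Equiv.Perm α)} {T : Set (Finset α)}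
    (hT : ∀ g ∈ s, ∀ F ∈ T, F.image g ∈ T) {π : Equiv.Perm α} (hπ : π ∈ Subgroup.closure s) :
    ∀ F ∈ T, F.image π ∈ T := by
  rw [← Subgroup.mem_toSubmonoid, Subgroup.closure_toSubmonoid_of_finite] at hπ
  induction hπ using Submonoid.closure_induction with
  | mem g hg => exact hT g hg
  | one => simp
  | mul a b _ _ ha hb =>
    intro F hF
    rw [Equiv.Perm.coe_mul, ← image_image]
    exact ha _ (hb F hF)

variable [Fintype α] (e : α ↪ ℕ)

theorem permMask_bitMask (g : Equiv.Perm α) (A : Finset α) :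
    permMask e g (bitMask e A) = bitMask e (A.image g) := by
  rw [permMask, ofBitMask_bitMask, map_eq_image]
  rfl

variable {gs : List (Equiv.Perm α)} {A : Finset α}

theorem maskOrbitIter_subset (n : ℕ) :
    ↑(maskOrbitIter e gs A n) ⊆ bitMask e '' imageOrbit (Subgroup.closure {g | g ∈ gs}) A := by
  induction n with
  | zero =>
    intro m hm
    rw [maskOrbitIter, Function.iterate_zero_apply, coe_singleton, Set.mem_singleton_iff] at hm
    exact ⟨A, ⟨1, one_mem _, by simp⟩, hm.symm⟩
  | succ n ih =>
    intro m hm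
    rw [maskOrbitIter, Function.iterate_succ_apply', maskOrbitStep, coe_union] at hm
    rcases hm with hm | hm
    · exact ih hm
    obtain ⟨m', hm', hm⟩ := mem_biUnion.1 hm
    obtain ⟨g, hg, rfl⟩ := List.mem_map.1 (List.mem_toFinset.1 hm)
    obtain ⟨_, ⟨π, hπ, rfl⟩, rfl⟩ := ih hm'
    refine ⟨A.image (g * π), ⟨g * π, mul_mem (Subgroup.subset_closure hg) hπ, rfl⟩, ?_⟩
    rw [permMask_bitMask, image_image, Equiv.Perm.coe_mul]

theorem bitMask_image_imageOrbit {n : ℕ}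
    (hclosed : maskOrbitStep e gs (maskOrbitIter e gs A n) ⊆ maskOrbitIter e gs A n) :
    bitMask e '' imageOrbit (Subgroup.closure {g | g ∈ gs}) A = maskOrbitIter e gs A n := by
  refine Set.Subset.antisymm ?_ (maskOrbitIter_subset e n)
  rintro _ ⟨_, ⟨π, hπ, rfl⟩, rfl⟩
  have hstable : ∀ g ∈ {g | g ∈ gs}, ∀ F ∈ {F | bitMask e F ∈ maskOrbitIter e gs A n},
      F.image g ∈ {F | bitMask e F ∈ maskOrbitIter e gs A n} := by
    intro g hg F hF
    rw [Set.mem_ofPred_eq, ← permMask_bitMask]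
    exact hclosed (mem_union_right _ (mem_biUnion.2
      ⟨_, hF, List.mem_toFinset.2 (List.mem_map_of_mem hg)⟩))
  exact image_mem_of_mem_closure hstable hπ A (bitMask_mem_maskOrbitIter e gs A n)

end Orbit

def v4Index : V4 ↪ ℕ := finProdFinEquiv.toEmbedding.trans Fin.valEmbedding

def gens12 : List (Equiv.Perm V4) := [gPerm, hPerm]

theorem G12_eq_closure_gens12 : G12 = Subgroup.closure {g | g ∈ gens12} := by
  rw [G12]
  congr 1
  ext g
  simp [gens12]

-- 5 and 8 are the radii of the two orbits under positive words in `g` and `h`.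
def masksA : Finset ℕ := maskOrbitIter v4Index gens12 basic12A 5

def masksB : Finset ℕ := maskOrbitIter v4Index gens12 basic12B 8

theorem bitMask_image_orbitA : bitMask v4Index '' imageOrbit G12 basic12A = masksA := by
  rw [G12_eq_closure_gens12]
  exact bitMask_image_imageOrbit v4Index (by decide +kernel)

theorem bitMask_image_orbitB : bitMask v4Index '' imageOrbit G12 basic12B = masksB := by
  rw [G12_eq_closure_gens12]
  exact bitMask_image_imageOrbit v4Index (by decide +kernel)

theorem facets12_eq_union : facets12 = imageOrbit G12 basic12A ∪ imageOrbit G12 basic12B := by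
  ext F
  simp only [facets12, imageOrbit, Set.mem_union, Set.mem_ofPred_eq]
  grind

theorem bitMask_image_facets12 : bitMask v4Index '' facets12 = ↑(masksA ∪ masksB) := by
  rw [facets12_eq_union, Set.image_union, bitMask_image_orbitA, bitMask_image_orbitB, coe_union]

theorem card_masks : masksA.card = 12 ∧ masksB.card = 60 ∧ (masksA ∪ masksB).card = 72 := by
  decide +kernel

theorem card_maskFaces :
    (maskFaces v4Index (masksA ∪ masksB) 0).card = 12 ∧
    (maskFaces v4Index (masksA ∪ masksB) 1).card = 60 ∧
    (maskFaces v4Index (masksA ∪ masksB) 2).card = 160 ∧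
    (maskFaces v4Index (masksA ∪ masksB) 3).card = 180 ∧
    (maskFaces v4Index (masksA ∪ masksB) 4).card = 72 := by
  decide +kernel

/-- `(S² × S²)₁₂` has 72 facets (orbits of lengths 12 and 60 of
the two basic facets) and face vector (12, 60, 160, 180, 72). -/
theorem stmt_14 :
    Set.ncard {F | ∃ π ∈ G12, F = basic12A.image ⇑π} = 12 ∧
    Set.ncard {F | ∃ π ∈ G12, F = basic12B.image ⇑π} = 60 ∧
    Set.ncard facets12 = 72 ∧
    fVec facets12 0 = 12 ∧ fVec facets12 1 = 60 ∧ fVec facets12 2 = 160 ∧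
    fVec facets12 3 = 180 ∧ fVec facets12 4 = 72 := by
  obtain ⟨hA, hB, hX⟩ := card_masks
  simp only [fVec_eq_card_maskFaces v4Index bitMask_image_facets12]
  exact ⟨(ncard_eq_card_of_bitMask_image v4Index bitMask_image_orbitA).trans hA,
    (ncard_eq_card_of_bitMask_image v4Index bitMask_image_orbitB).trans hB,
    (ncard_eq_card_of_bitMask_image v4Index bitMask_image_facets12).trans hX, card_maskFaces⟩
end
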